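/- arXiv:2410.05263 — 4 statements merged into one kernel-verified Lean document; each statement's English description precedes it below -/
import Mathlib

section
/- For the general symmetric non-conformity score s_i^b = max(f_lo(ŷ_i)+b - y_i, y_i - f_hi(ŷ_i)-b), the score satisfies s_i^b ≤ s_i^0 + |b| for every i, where s_i^0 is the unbiased score. Consequently, the symmetric adjustment satisfies q^b ≤ q^0 + |b| and the symmetrically adjusted interval length satisfies L_sym(ŷ_{n+1}+b) = f_hi(ŷ_{n+1}) - f_lo(ŷ_{n+1}) + 2q^b ≤ L_sym(ŷ_{n+1}) + 2|b| (Theorem 1 of the paper). -/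
/-- The `k`-th smallest element (1-indexed order statistic) of a finite list of reals. -/
noncomputable def orderStat (l : List ℝ) (k : ℕ) : ℝ :=
  (l.insertionSort (· ≤ ·)).getD (k - 1) 0

/-- The empirical `β`-quantile of a finite list `S`: its `⌈β * |S|⌉`-th smallest element. -/
noncomputable def empQuant (S : List ℝ) (β : ℝ) : ℝ :=
  orderStat S (⌈β * S.length⌉).toNat

private lemma countP_mono_pair : ∀ (l m : List ℝ) (p q : ℝ → Bool),
    l.length = m.length →
    (∀ i (h1 : i < l.length) (h2 : i < m.length), p l[i] → q m[i]) →
    l.countP p ≤ m.countP q := by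
  intro l
  induction l with
  | nil => intro m p q h _; simp
  | cons a l ih =>
    intro m p q hlen h
    cases m with
    | nil => simp at hlen
    | cons b m =>
      simp only [List.countP_cons]
      have h0 := h 0 (by simp) (by simp)
      have := ih m p q (by simpa using hlen)
        (fun i h1 h2 => by exact h (i+1) (by simpa using h1) (by simpa using h2))
      by_cases hp : p a
      · have hq : q b := h0 hp
        simp [hp, hq]; omega
      · simp [hp]
        split <;> omega

private lemma sorted_count_ge (s : List ℝ) (hs : s.Pairwise (· ≤ ·)) (j : ℕ) (hj : j < s.length) :
    j + 1 ≤ s.countP (fun a => decide (a ≤ s[j])) := by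
  have hsub : (s.take (j+1)).Sublist s := List.take_sublist _ _
  have hlen : (s.take (j+1)).length = j + 1 := by simp; omega
  have hall : ∀ x ∈ s.take (j+1), x ≤ s[j] := by
    intro x hx
    obtain ⟨i, hi, rfl⟩ := List.mem_iff_getElem.mp hx
    rw [List.getElem_take]
    rw [hlen] at hi
    rcases Nat.lt_or_ge i j with h | h
    · exact ((List.pairwise_iff_getElem.mp hs) i j (by omega) hj h)
    · have : i = j := by omega
      subst this; rfl
  calc j + 1 = (s.take (j+1)).countP (fun a => decide (a ≤ s[j])) := by
        rw [List.countP_eq_length.mpr (fun x hx => by simpa using hall x hx), hlen]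
    _ ≤ s.countP _ := hsub.countP_le

private lemma sorted_getElem_le (s : List ℝ) (hs : s.Pairwise (· ≤ ·)) (j : ℕ) (hj : j < s.length)
    (x : ℝ) (hc : j + 1 ≤ s.countP (fun a => decide (a ≤ x))) : s[j] ≤ x := by
  by_contra hgt
  push_neg at hgt
  have hdrop : (s.drop j).countP (fun a => decide (a ≤ x)) = 0 := by
    rw [List.countP_eq_zero]
    intro a ha
    obtain ⟨i, hi, rfl⟩ := List.mem_iff_getElem.mp ha
    have hji : j + i < s.length := by simp at hi; omega
    rw [List.getElem_drop]
    simp only [decide_eq_true_eq]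
    push_neg
    calc x < s[j] := hgt
      _ ≤ s[j + i] := by
        rcases Nat.eq_zero_or_pos i with h | h
        · subst h; simp
        · exact ((List.pairwise_iff_getElem.mp hs) j (j+i) (by omega) hji (by omega))
  have := List.take_append_drop j s
  have hcount : s.countP (fun a => decide (a ≤ x)) =
      (s.take j).countP (fun a => decide (a ≤ x)) + (s.drop j).countP (fun a => decide (a ≤ x)) := by
    conv_lhs => rw [← this]
    exact List.countP_append
  have h1 : (s.take j).countP (fun a => decide (a ≤ x)) ≤ j := by
    calc _ ≤ (s.take j).length := List.countP_le_length
      _ ≤ j := by simp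
  omega

private lemma orderStat_le_shift {n : ℕ} (a c : Fin n → ℝ) (t : ℝ) (ht : 0 ≤ t)
    (h : ∀ i, a i ≤ c i + t) (k : ℕ) :
    orderStat (List.ofFn a) k ≤ orderStat (List.ofFn c) k + t := by
  unfold orderStat
  set s₁ := (List.ofFn a).insertionSort (· ≤ ·) with hs1
  set s₂ := (List.ofFn c).insertionSort (· ≤ ·) with hs2
  have hl1 : s₁.length = n := by
    rw [hs1, (List.perm_insertionSort _ _).length_eq, List.length_ofFn]
  have hl2 : s₂.length = n := by
    rw [hs2, (List.perm_insertionSort _ _).length_eq, List.length_ofFn]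
  set j := k - 1 with hj
  rcases Nat.lt_or_ge j n with hjn | hjn
  · have hj1 : j < s₁.length := by omega
    have hj2 : j < s₂.length := by omega
    rw [List.getD_eq_getElem _ _ hj1, List.getD_eq_getElem _ _ hj2]
    set x := s₂[j] with hx
    have hc2 : j + 1 ≤ s₂.countP (fun a => decide (a ≤ x)) :=
      sorted_count_ge s₂ (List.pairwise_insertionSort _ _) j hj2
    have hperm2 : (List.ofFn c).countP (fun a => decide (a ≤ x)) =
        s₂.countP (fun a => decide (a ≤ x)) := ((List.perm_insertionSort _ _).countP_eq _).symm
    have hmono : (List.ofFn c).countP (fun a => decide (a ≤ x))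
        ≤ (List.ofFn a).countP (fun a => decide (a ≤ x + t)) := by
      apply countP_mono_pair _ _ _ _ (by simp)
      intro i h1 h2
      simp only [List.getElem_ofFn, decide_eq_true_eq]
      intro hci
      calc a ⟨i, by simpa using h1⟩ ≤ c ⟨i, by simpa using h1⟩ + t := h _
        _ ≤ x + t := by linarith
    have hperm1 : (List.ofFn a).countP (fun a => decide (a ≤ x + t)) =
        s₁.countP (fun a => decide (a ≤ x + t)) := ((List.perm_insertionSort _ _).countP_eq _).symm
    exact sorted_getElem_le s₁ (List.pairwise_insertionSort _ _) j hj1 (x + t) (by omega)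
  · rw [List.getD_eq_default _ _ (by omega), List.getD_eq_default _ _ (by omega)]
    linarith


/-- Theorem 1 of the paper: s_i^b ≤ s_i^0 + |b|, q^b ≤ q^0 + |b|, and
L_sym(yhat_{n+1}+b) ≤ L_sym(yhat_{n+1}) + 2|b|. -/
theorem sym_length_bound (n : ℕ) (yhat y : Fin n → ℝ) (yhatt : ℝ) (flo fhi : ℝ → ℝ)
    (hlo : ∀ x t, flo (x + t) = flo x + t) (hhi : ∀ x t, fhi (x + t) = fhi x + t)
    (b : ℝ) (k : ℕ) :
    (∀ i, max (flo (yhat i) + b - y i) (y i - fhi (yhat i) - b)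
        ≤ max (flo (yhat i) - y i) (y i - fhi (yhat i)) + |b|) ∧
    orderStat (List.ofFn fun i => max (flo (yhat i) + b - y i) (y i - fhi (yhat i) - b)) k
      ≤ orderStat (List.ofFn fun i => max (flo (yhat i) - y i) (y i - fhi (yhat i))) k + |b| ∧
    fhi (yhatt + b) - flo (yhatt + b)
        + 2 * orderStat (List.ofFn fun i => max (flo (yhat i) + b - y i) (y i - fhi (yhat i) - b)) k
      ≤ (fhi yhatt - flo yhatt
          + 2 * orderStat (List.ofFn fun i => max (flo (yhat i) - y i) (y i - fhi (yhat i))) k)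
        + 2 * |b| := by
  have h1 : ∀ i, max (flo (yhat i) + b - y i) (y i - fhi (yhat i) - b)
      ≤ max (flo (yhat i) - y i) (y i - fhi (yhat i)) + |b| := by
    intro i
    have hb1 : b ≤ |b| := le_abs_self b
    have hb2 : -b ≤ |b| := neg_le_abs b
    apply max_le
    · have : flo (yhat i) + b - y i ≤ flo (yhat i) - y i + |b| := by linarith
      exact this.trans (by gcongr; exact le_max_left _ _)
    · have : y i - fhi (yhat i) - b ≤ y i - fhi (yhat i) + |b| := by linarith
      exact this.trans (by gcongr; exact le_max_right _ _)
  have h2 := orderStat_le_shift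
    (fun i => max (flo (yhat i) + b - y i) (y i - fhi (yhat i) - b))
    (fun i => max (flo (yhat i) - y i) (y i - fhi (yhat i)))
    |b| (abs_nonneg b) h1 k
  refine ⟨h1, h2, ?_⟩
  rw [hlo yhatt b, hhi yhatt b]
  linarith
end

section
/- For asymmetric non-conformity scores s_{i,lo}^b = f_lo(ŷ_i)+b - y_i and s_{i,hi}^b = y_i - f_hi(ŷ_i) - b, the adjustments satisfy q_lo^b = q_lo^0 + b and q_hi^b = q_hi^0 - b, and hence the asymmetric interval length L_asym(ŷ_{n+1}+b) = f_hi(ŷ_{n+1}+b) - f_lo(ŷ_{n+1}+b) + q_hi^b + q_lo^b equals L_asym(ŷ_{n+1}), i.e., asymmetrically adjusted interval lengths are independent of the bias b (Theorem 2 of the paper). -/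
lemma sort_map_add (l : List ℝ) (b : ℝ) :
    (l.map (· + b)).insertionSort (· ≤ ·) = (l.insertionSort (· ≤ ·)).map (· + b) := by
  haveI : IsAntisymm ℝ (· ≤ ·) := ⟨fun _ _ => le_antisymm⟩
  refine (fun hp h1 h2 => List.Perm.eq_of_pairwise' (r := (· ≤ ·)) h1 h2 hp) ?_ ?_ ?_
  · exact (List.perm_insertionSort _ _).trans (((List.perm_insertionSort (· ≤ ·) l).map _).symm)
  · exact List.pairwise_insertionSort _ _
  · exact List.Pairwise.map (· + b) (fun _ _ h => by simpa using h)
      (List.pairwise_insertionSort (· ≤ ·) l)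

lemma orderStat_map_add (l : List ℝ) (b : ℝ) (k : ℕ) (h1 : 1 ≤ k) (h2 : k ≤ l.length) :
    orderStat (l.map (· + b)) k = orderStat l k + b := by
  have hlen : k - 1 < (l.insertionSort (· ≤ ·)).length := by
    rw [List.length_insertionSort]; omega
  rw [orderStat, orderStat, sort_map_add, List.getD_eq_getElem _ _ (by simpa using hlen),
    List.getD_eq_getElem _ _ hlen, List.getElem_map]

/-- Theorem 2 of the paper: asymmetric adjustments shift with the bias, so the
asymmetric interval length is independent of the bias b. -/
theorem asym_length_bias_independent (n : ℕ) (yhat y : Fin n → ℝ) (yhatt : ℝ)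
    (flo fhi : ℝ → ℝ)
    (hlo : ∀ x t, flo (x + t) = flo x + t) (hhi : ∀ x t, fhi (x + t) = fhi x + t)
    (b : ℝ) (klo khi : ℕ)
    (hklo : 1 ≤ klo ∧ klo ≤ n) (hkhi : 1 ≤ khi ∧ khi ≤ n) :
    orderStat (List.ofFn fun i => flo (yhat i) + b - y i) klo
        = orderStat (List.ofFn fun i => flo (yhat i) - y i) klo + b ∧
    orderStat (List.ofFn fun i => y i - fhi (yhat i) - b) khi
        = orderStat (List.ofFn fun i => y i - fhi (yhat i)) khi - b ∧
    fhi (yhatt + b) - flo (yhatt + b)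
        + orderStat (List.ofFn fun i => y i - fhi (yhat i) - b) khi
        + orderStat (List.ofFn fun i => flo (yhat i) + b - y i) klo
      = fhi yhatt - flo yhatt
        + orderStat (List.ofFn fun i => y i - fhi (yhat i)) khi
        + orderStat (List.ofFn fun i => flo (yhat i) - y i) klo := by
  have e1 : (List.ofFn fun i => flo (yhat i) + b - y i)
      = (List.ofFn fun i => flo (yhat i) - y i).map (· + b) := by
    simp only [List.map_ofFn, Function.comp_def]
    congr 1
    try (funext i; ring)
  have e2 : (List.ofFn fun i => y i - fhi (yhat i) - b)
      = (List.ofFn fun i => y i - fhi (yhat i)).map (· + (-b)) := by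
    simp only [List.map_ofFn, Function.comp_def]
    congr 1
    try (funext i; ring)
  have h1 : orderStat (List.ofFn fun i => flo (yhat i) + b - y i) klo
      = orderStat (List.ofFn fun i => flo (yhat i) - y i) klo + b := by
    rw [e1]; exact orderStat_map_add _ b klo hklo.1 (by simpa using hklo.2)
  have h2 : orderStat (List.ofFn fun i => y i - fhi (yhat i) - b) khi
      = orderStat (List.ofFn fun i => y i - fhi (yhat i)) khi - b := by
    rw [e2]
    have := orderStat_map_add (List.ofFn fun i => y i - fhi (yhat i)) (-b) khi hkhi.1
      (by simpa using hkhi.2)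
    linarith
  refine ⟨h1, h2, ?_⟩
  rw [h1, h2, hlo yhatt b, hhi yhatt b]; ring
end

section
/- Suppose (s_1, ..., s_{n+1}) are exchangeable real-valued random variables, and let q = the ⌈(1-α)(n+1)⌉-th smallest value among s_1, ..., s_n (with q = +∞ if ⌈(1-α)(n+1)⌉ > n). Then P(s_{n+1} ≤ q) ≥ 1 − α. -/
open MeasureTheory

open scoped ENNReal NNReal

section Aux

lemma ccl_sorted_getElem_mono (m : List ℝ) (hm : m.Pairwise (· ≤ ·)) {i j : ℕ} (hij : i ≤ j)
    (hj : j < m.length) : m[i]'(lt_of_le_of_lt hij hj) ≤ m[j] := by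
  rcases eq_or_lt_of_le hij with rfl | h
  · exact le_refl _
  · exact List.pairwise_iff_getElem.mp hm i j _ _ h

lemma ccl_take_all_count (m : List ℝ) (k : ℕ) (hk : k ≤ m.length) (p : ℝ → Bool)
    (h : ∀ a ∈ m.take k, p a) : k ≤ m.countP p := by
  have h1 : (m.take k).countP p = (m.take k).length := List.countP_eq_length.mpr h
  have h2 : (m.take k).length = k := List.length_take_of_le hk
  have h3 : m.countP p = (m.take k).countP p + (m.drop k).countP p := by
    rw [← List.countP_append, List.take_append_drop]
  omega

lemma ccl_sorted_le_iff (m : List ℝ) (hm : m.Pairwise (· ≤ ·)) (k : ℕ) (hk1 : 1 ≤ k)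
    (hk : k ≤ m.length) (x : ℝ) :
    x ≤ m.getD (k-1) 0 ↔ m.countP (fun a => decide (a < x)) < k := by
  have hlt : k - 1 < m.length := by omega
  rw [List.getD_eq_getElem _ _ hlt]
  constructor
  · intro h
    have hdrop : (m.drop (k-1)).countP (fun a => decide (a < x)) = 0 := by
      rw [List.countP_eq_zero]
      intro a ha
      obtain ⟨i, hi, rfl⟩ := List.mem_iff_getElem.mp ha
      rw [List.getElem_drop]
      simp only [decide_eq_true_eq, not_lt]
      exact le_trans h (ccl_sorted_getElem_mono m hm (Nat.le_add_right _ _) _)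
    have htake : (m.take (k-1)).countP (fun a => decide (a < x)) ≤ k - 1 :=
      le_trans (List.countP_le_length) (by simp)
    have hsplit : m.countP (fun a => decide (a < x)) =
        (m.take (k-1)).countP (fun a => decide (a < x)) +
        (m.drop (k-1)).countP (fun a => decide (a < x)) := by
      rw [← List.countP_append, List.take_append_drop]
    omega
  · intro h
    by_contra hx
    push_neg at hx
    have : k ≤ m.countP (fun a => decide (a < x)) := by
      apply ccl_take_all_count m k hk
      intro a ha
      obtain ⟨i, hi, rfl⟩ := List.mem_iff_getElem.mp ha
      rw [List.getElem_take]
      simp only [decide_eq_true_eq]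
      have hik : i ≤ k - 1 := by simp [List.length_take] at hi; omega
      exact lt_of_le_of_lt (ccl_sorted_getElem_mono m hm hik hlt) hx
    omega

lemma ccl_sorted_count_le (m : List ℝ) (hm : m.Pairwise (· ≤ ·)) (k : ℕ) (hk1 : 1 ≤ k)
    (hk : k ≤ m.length) :
    k ≤ m.countP (fun a => decide (a ≤ m.getD (k-1) 0)) := by
  have hlt : k - 1 < m.length := by omega
  rw [List.getD_eq_getElem _ _ hlt]
  apply ccl_take_all_count m k hk
  intro a ha
  obtain ⟨i, hi, rfl⟩ := List.mem_iff_getElem.mp ha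
  rw [List.getElem_take]
  simp only [decide_eq_true_eq]
  have hik : i ≤ k - 1 := by simp [List.length_take] at hi; omega
  exact ccl_sorted_getElem_mono m hm hik hlt

lemma ccl_le_orderStat_iff (l : List ℝ) (k : ℕ) (hk1 : 1 ≤ k) (hk : k ≤ l.length) (x : ℝ) :
    x ≤ orderStat l k ↔ l.countP (fun a => decide (a < x)) < k := by
  rw [orderStat, ← (List.perm_insertionSort (· ≤ ·) l).countP_eq]
  exact ccl_sorted_le_iff _ (List.pairwise_insertionSort _ l) k hk1
    (by rw [List.length_insertionSort]; exact hk) x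

lemma ccl_orderStat_count_le (l : List ℝ) (k : ℕ) (hk1 : 1 ≤ k) (hk : k ≤ l.length) :
    k ≤ l.countP (fun a => decide (a ≤ orderStat l k)) := by
  rw [orderStat, ← (List.perm_insertionSort (· ≤ ·) l).countP_eq]
  exact ccl_sorted_count_le _ (List.pairwise_insertionSort _ l) k hk1
    (by rw [List.length_insertionSort]; exact hk)

lemma ccl_countP_ofFn {N : ℕ} (f : Fin N → ℝ) (p : ℝ → Prop) [DecidablePred p] :
    (List.ofFn f).countP (fun a => decide (p a)) = (Finset.univ.filter fun j => p (f j)).card := by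
  rw [List.ofFn_eq_map, List.countP_map, List.countP_eq_length_filter, Fin.univ_def]
  simp only [Finset.filter, Finset.card, Multiset.filter_coe, Multiset.coe_card]
  rfl

/-- the strict-rank count -/
noncomputable def cclCnt {N : ℕ} (x : Fin N → ℝ) (i : Fin N) : ℕ :=
  (Finset.univ.filter fun j => x j < x i).card

lemma cclCnt_eq_countP {N : ℕ} (x : Fin N → ℝ) (i : Fin N) :
    cclCnt x i = (List.ofFn x).countP (fun a => decide (a < x i)) :=
  (ccl_countP_ofFn x (fun a => a < x i)).symm

lemma cclCnt_comp_perm {N : ℕ} (x : Fin N → ℝ) (σ : Equiv.Perm (Fin N)) (j : Fin N) :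
    cclCnt (x ∘ σ) j = cclCnt x (σ j) := by
  unfold cclCnt
  rw [show (Finset.univ.filter fun j' => (x ∘ σ) j' < (x ∘ σ) j) =
      (Finset.univ.filter fun a => x a < x (σ j)).map σ.symm.toEmbedding from ?_,
    Finset.card_map]
  ext a
  simp only [Finset.mem_filter, Finset.mem_univ, true_and, Finset.mem_map,
    Equiv.coe_toEmbedding, Function.comp_apply]
  constructor
  · intro h; exact ⟨σ a, h, Equiv.symm_apply_apply σ a⟩
  · rintro ⟨b, hb, rfl⟩; simpa using hb

lemma cclCnt_measurable {N : ℕ} (i : Fin N) : Measurable fun x : Fin N → ℝ => cclCnt x i := by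
  unfold cclCnt
  simp_rw [Finset.card_filter]
  apply Finset.measurable_sum
  intro j _
  exact Measurable.ite (measurableSet_lt (measurable_pi_apply j) (measurable_pi_apply i))
    measurable_const measurable_const

/-- combinatorial claim: at least k indices have strict rank < k -/
lemma ccl_card_low_rank {N : ℕ} (x : Fin N → ℝ) (k : ℕ) (hk1 : 1 ≤ k) (hk : k ≤ N) :
    k ≤ (Finset.univ.filter fun i => cclCnt x i < k).card := by
  have hkl : k ≤ (List.ofFn x).length := by simp; omega
  have key : ∀ i, x i ≤ orderStat (List.ofFn x) k ↔ cclCnt x i < k := by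
    intro i
    rw [cclCnt_eq_countP]
    exact ccl_le_orderStat_iff _ k hk1 hkl (x i)
  have heq : (Finset.univ.filter fun i => cclCnt x i < k) =
      (Finset.univ.filter fun i => x i ≤ orderStat (List.ofFn x) k) := by
    apply Finset.filter_congr; intro i _; simp [← key i]
  rw [heq, ← ccl_countP_ofFn x (fun a => a ≤ orderStat (List.ofFn x) k)]
  exact ccl_orderStat_count_le _ k hk1 hkl

end Aux

/-- The fundamental conformal calibration lemma: coverage lower bound.
The disjunct ⌈(1-α)(n+1)⌉ > n encodes the convention q = +∞ in that case. -/
theorem conformal_coverage_lower (n : ℕ) {Ω : Type*} [MeasurableSpace Ω]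
    (P : Measure Ω) [IsProbabilityMeasure P]
    (s : Fin (n + 1) → Ω → ℝ) (hmeas : ∀ i, Measurable (s i))
    (hexch : ∀ σ : Equiv.Perm (Fin (n + 1)),
      Measure.map (fun ω i => s (σ i) ω) P = Measure.map (fun ω i => s i ω) P)
    (α : ℝ) (hα0 : 0 < α) (hα1 : α < 1) :
    ENNReal.ofReal (1 - α) ≤
      P {ω | n < (⌈(1 - α) * ((n : ℝ) + 1)⌉).toNat ∨
             s (Fin.last n) ω ≤
               orderStat (List.ofFn fun i : Fin n => s i.castSucc ω)
                 (⌈(1 - α) * ((n : ℝ) + 1)⌉).toNat} := by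
  set k : ℕ := (⌈(1 - α) * ((n : ℝ) + 1)⌉).toNat with hkdef
  have hy0 : (0:ℝ) < (1 - α) * ((n : ℝ) + 1) := by
    apply mul_pos (by linarith)
    positivity
  have hceil_pos : 0 < ⌈(1 - α) * ((n : ℝ) + 1)⌉ := Int.ceil_pos.mpr hy0
  have hk1 : 1 ≤ k := by omega
  have hkreal : (1 - α) * ((n : ℝ) + 1) ≤ (k : ℝ) := by
    have h1 : ((k : ℕ) : ℤ) = ⌈(1 - α) * ((n : ℝ) + 1)⌉ := by
      rw [hkdef]; exact Int.toNat_of_nonneg (le_of_lt hceil_pos)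
    calc (1 - α) * ((n : ℝ) + 1) ≤ (⌈(1 - α) * ((n : ℝ) + 1)⌉ : ℝ) :=
          Int.le_ceil _
      _ = (((k : ℕ) : ℤ) : ℝ) := by rw [h1]
      _ = (k : ℝ) := by push_cast; rfl
  have hkn : k ≤ n + 1 := by
    have h2 : ⌈(1 - α) * ((n : ℝ) + 1)⌉ ≤ ((n:ℤ) + 1) :=
      Int.ceil_le.mpr (by push_cast; nlinarith)
    omega
  -- trivial case
  rcases lt_or_ge n k with hnk | hnk
  · have : {ω | n < k ∨
        s (Fin.last n) ω ≤ orderStat (List.ofFn fun i : Fin n => s i.castSucc ω) k} =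
        Set.univ := by
      ext ω; simp [hnk]
    rw [this, measure_univ]
    exact ENNReal.ofReal_le_one.mpr (by linarith)
  -- main case : k ≤ n
  · set X : Ω → (Fin (n+1) → ℝ) := fun ω j => s j ω with hXdef
    have hX : Measurable X := measurable_pi_iff.mpr hmeas
    set A : Fin (n+1) → Set (Fin (n+1) → ℝ) := fun i => {x | cclCnt x i < k} with hAdef
    have hA : ∀ i, MeasurableSet (A i) := fun i =>
      (cclCnt_measurable i) (by trivial : MeasurableSet (Set.Iio k))
    -- equal probabilities by exchangeability
    have hEq : ∀ i, P (X ⁻¹' A i) = P (X ⁻¹' A (Fin.last n)) := by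
      intro i
      set σ : Equiv.Perm (Fin (n+1)) := Equiv.swap (Fin.last n) i with hσ
      have hAe : A i = (fun x => x ∘ σ) ⁻¹' A (Fin.last n) := by
        ext x
        simp only [hAdef, Set.mem_setOf_eq, Set.mem_preimage]
        rw [cclCnt_comp_perm]
        rw [show σ (Fin.last n) = i from Equiv.swap_apply_left _ _]
      have hcomp : Measurable fun x : Fin (n+1) → ℝ => x ∘ σ :=
        measurable_pi_iff.mpr fun j => measurable_pi_apply _
      have hfun : (fun ω => X ω ∘ σ) = fun ω j => s (σ j) ω := rfl
      have hfun2 : X = fun ω j => s j ω := rfl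
      calc P (X ⁻¹' A i) = (P.map X) (A i) := (Measure.map_apply hX (hA i)).symm
        _ = (P.map X) ((fun x => x ∘ σ) ⁻¹' A (Fin.last n)) := by rw [← hAe]
        _ = ((P.map X).map (fun x => x ∘ σ)) (A (Fin.last n)) :=
            (Measure.map_apply hcomp (hA (Fin.last n))).symm
        _ = (P.map (fun ω => X ω ∘ σ)) (A (Fin.last n)) := by
            rw [Measure.map_map hcomp hX]; rfl
        _ = (P.map X) (A (Fin.last n)) := by rw [hfun, hfun2, hexch σ]
        _ = P (X ⁻¹' A (Fin.last n)) := Measure.map_apply hX (hA (Fin.last n))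
    -- lower bound on the sum
    have hsum : (k : ℝ≥0∞) ≤ ∑ i : Fin (n+1), P (X ⁻¹' A i) := by
      have hPi : ∀ i : Fin (n+1), P (X ⁻¹' A i) =
          ∫⁻ ω, (X ⁻¹' A i).indicator (fun _ => (1:ℝ≥0∞)) ω ∂P := by
        intro i
        rw [show (fun _ : Ω => (1:ℝ≥0∞)) = (1 : Ω → ℝ≥0∞) from rfl,
          lintegral_indicator_one (hX (hA i))]
      simp_rw [hPi]
      rw [← lintegral_finset_sum _ (fun i _ =>
        (measurable_const.indicator (hX (hA i))))]
      have hpt : ∀ ω, (k : ℝ≥0∞) ≤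
          ∑ i : Fin (n+1), (X ⁻¹' A i).indicator (fun _ => (1:ℝ≥0∞)) ω := by
        intro ω
        have hcard : ∑ i : Fin (n+1), (X ⁻¹' A i).indicator (fun _ => (1:ℝ≥0∞)) ω =
            ((Finset.univ.filter fun i => cclCnt (X ω) i < k).card : ℝ≥0∞) := by
          rw [Finset.card_filter]
          push_cast
          apply Finset.sum_congr rfl
          intro i _
          simp only [Set.indicator_apply, Set.mem_preimage, hAdef, Set.mem_setOf_eq]
          split <;> simp_all
        rw [hcard]
        exact_mod_cast Nat.cast_le.mpr (ccl_card_low_rank (X ω) k hk1 (by omega))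
      calc (k : ℝ≥0∞) = ∫⁻ ω, (k : ℝ≥0∞) ∂P := by simp
        _ ≤ _ := lintegral_mono hpt
    -- sum equals (n+1) * P(E)
    have hsum2 : ∑ i : Fin (n+1), P (X ⁻¹' A i) =
        ((n:ℝ≥0∞) + 1) * P (X ⁻¹' A (Fin.last n)) := by
      rw [Finset.sum_congr rfl (fun i _ => hEq i), Finset.sum_const]
      simp [Finset.card_univ, nsmul_eq_mul]
    have hkey : (k : ℝ≥0∞) ≤ ((n:ℝ≥0∞) + 1) * P (X ⁻¹' A (Fin.last n)) := by
      rw [← hsum2]; exact hsum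
    -- ofReal (1-α) ≤ P E
    have hPE : ENNReal.ofReal (1 - α) ≤ P (X ⁻¹' A (Fin.last n)) := by
      have h1 : ENNReal.ofReal (1 - α) * ((n:ℝ≥0∞) + 1) ≤ (k : ℝ≥0∞) := by
        have hn : ((n:ℝ≥0∞) + 1) = ENNReal.ofReal ((n:ℝ) + 1) := by
          rw [ENNReal.ofReal_add (by positivity) zero_le_one]
          simp
        rw [hn, ← ENNReal.ofReal_mul (by linarith)]
        calc ENNReal.ofReal ((1 - α) * ((n:ℝ) + 1)) ≤ ENNReal.ofReal (k : ℝ) :=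
              ENNReal.ofReal_le_ofReal hkreal
          _ = (k : ℝ≥0∞) := ENNReal.ofReal_natCast k
      have h2 : ((n:ℝ≥0∞) + 1) * ENNReal.ofReal (1 - α) ≤
          ((n:ℝ≥0∞) + 1) * P (X ⁻¹' A (Fin.last n)) := by
        rw [mul_comm]; exact h1.trans hkey
      exact (ENNReal.mul_le_mul_iff_right (by simp) (by simp)).mp h2
    -- E ⊆ target set
    refine hPE.trans (measure_mono ?_)
    intro ω hω
    right
    simp only [Set.mem_preimage, hAdef, Set.mem_setOf_eq] at hω
    set l : List ℝ := List.ofFn fun i : Fin n => s i.castSucc ω with hldef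
    have hllen : k ≤ l.length := by simp [hldef]; omega
    apply (ccl_le_orderStat_iff l k hk1 hllen (s (Fin.last n) ω)).mpr
    have hl : l.countP (fun a => decide (a < s (Fin.last n) ω)) =
        (Finset.univ.filter fun i : Fin n => s i.castSucc ω < s (Fin.last n) ω).card :=
      ccl_countP_ofFn _ (fun a => a < s (Fin.last n) ω)
    have hcnt : cclCnt (X ω) (Fin.last n) =
        (Finset.univ.filter fun i : Fin n => s i.castSucc ω < s (Fin.last n) ω).card := by
      unfold cclCnt
      rw [Finset.card_filter, Finset.card_filter, Fin.sum_univ_castSucc]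
      simp [hXdef]
    rw [hl, ← hcnt]
    exact hω
end

section
/- In the setting of the conformal calibration lemma, if additionally the random variables s_1, ..., s_{n+1} are almost surely distinct, then P(s_{n+1} ≤ q) ≤ 1 − α + 1/(n+1). -/
open MeasureTheory

open Finset Function
open scoped ENNReal

lemma card_filter_comp_inj {ι α : Type*} [Fintype ι] [DecidableEq α] (f : ι → α)
    (hf : Injective f) (p : α → Prop) [DecidablePred p] :
    (univ.filter fun j => p (f j)).card = ((univ.image f).filter p).card := by
  rw [Finset.filter_image, Finset.card_image_of_injective _ hf]

lemma card_filter_comp_equiv {ι : Type*} [Fintype ι] [DecidableEq ι] (e : Equiv.Perm ι)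
    (p : ι → Prop) [DecidablePred p] :
    (univ.filter fun j => p (e j)).card = (univ.filter p).card := by
  rw [card_filter_comp_inj e e.injective p, Finset.image_univ_equiv]

noncomputable def rnk {m : ℕ} (x : Fin m → ℝ) (i : Fin m) : ℕ :=
  (univ.filter fun j => x j ≤ x i).card

section rank
variable {m : ℕ} (x : Fin m → ℝ) (hx : Injective x)

include hx in
lemma rnk_inj : Injective (rnk x) := by
  intro i j hij
  by_contra hne
  wlog hlt : x i < x j generalizing i j
  · exact this hij.symm (Ne.symm hne) (lt_of_le_of_ne (not_lt.mp hlt) (fun h => hne (hx h.symm)))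
  have hsub : (univ.filter fun l => x l ≤ x i) ⊂ (univ.filter fun l => x l ≤ x j) := by
    constructor
    · intro l hl
      simp only [mem_filter, mem_univ, true_and] at *
      exact hl.trans hlt.le
    · intro h
      have := h (mem_filter.mpr ⟨mem_univ j, le_refl _⟩)
      simp only [mem_filter, mem_univ, true_and] at this
      exact absurd hlt (not_lt.mpr this)
  exact absurd hij (Nat.ne_of_lt (Finset.card_lt_card hsub))

lemma rnk_pos (i : Fin m) : 1 ≤ rnk x i :=
  Finset.card_pos.mpr ⟨i, mem_filter.mpr ⟨mem_univ _, le_refl _⟩⟩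

lemma rnk_le (i : Fin m) : rnk x i ≤ m := by
  have := Finset.card_filter_le (univ : Finset (Fin m)) (fun j => x j ≤ x i)
  simpa [rnk] using this

include hx in
lemma image_rnk : univ.image (rnk x) = Finset.Icc 1 m := by
  apply Finset.eq_of_subset_of_card_le
  · intro t ht
    simp only [mem_image, mem_univ, true_and] at ht
    obtain ⟨i, rfl⟩ := ht
    exact Finset.mem_Icc.mpr ⟨rnk_pos x i, rnk_le x i⟩
  · rw [Nat.card_Icc, Finset.card_image_of_injective _ (rnk_inj x hx), card_univ, Fintype.card_fin]
    omega

include hx in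
lemma card_rnk_le (k : ℕ) (hk : k ≤ m) :
    (univ.filter fun i => rnk x i ≤ k).card = k := by
  have h1 : (univ.filter fun i => rnk x i ≤ k).card
      = ((univ.image (rnk x)).filter fun t => t ≤ k).card := by
    rw [Finset.filter_image, Finset.card_image_of_injective _ (rnk_inj x hx)]
  rw [h1, image_rnk x hx]
  have : (Finset.Icc 1 m).filter (fun t => t ≤ k) = Finset.Icc 1 k := by
    ext t; simp only [mem_filter, Finset.mem_Icc]; omega
  rw [this, Nat.card_Icc]
  omega

end rank

lemma rank_iff {n : ℕ} (k : ℕ) (hk1 : 1 ≤ k) (hkn : k ≤ n) (x : Fin (n+1) → ℝ)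
    (hx : Injective x) :
    (x (Fin.last n) ≤ orderStat (List.ofFn fun i : Fin n => x i.castSucc) k) ↔
      rnk x (Fin.last n) ≤ k := by
  set l : List ℝ := List.ofFn (fun i : Fin n => x i.castSucc) with hl
  set l' : List ℝ := l.insertionSort (· ≤ ·) with hl'
  have hlen : l'.length = n := by
    rw [hl', List.length_insertionSort, hl, List.length_ofFn]
  have hsorted : l'.Pairwise (· ≤ ·) := List.pairwise_insertionSort _ _
  have hperm : l'.Perm l := List.perm_insertionSort _ _
  have hxc : Injective (fun i : Fin n => x i.castSucc) :=
    hx.comp (Fin.castSucc_injective n)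
  have hnodupl : l.Nodup := List.nodup_ofFn.mpr hxc
  have hnodup' : l'.Nodup := hperm.nodup_iff.mpr hnodupl
  set y : Fin n → ℝ := fun j => l'[(j : ℕ)]'(by rw [hlen]; exact j.isLt) with hy
  have hymono : StrictMono y := by
    intro i j hij
    have hle : y i ≤ y j :=
      List.pairwise_iff_getElem.mp hsorted (i : ℕ) (j : ℕ)
        (by rw [hlen]; exact i.isLt) (by rw [hlen]; exact j.isLt) hij
    have hne : y i ≠ y j :=
      List.pairwise_iff_getElem.mp hnodup' (i : ℕ) (j : ℕ)
        (by rw [hlen]; exact i.isLt) (by rw [hlen]; exact j.isLt) hij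
    exact lt_of_le_of_ne hle hne
  have himg : univ.image y = univ.image (fun j : Fin n => x j.castSucc) := by
    ext t
    simp only [mem_image, mem_univ, true_and]
    constructor
    · rintro ⟨j, rfl⟩
      have hmem : y j ∈ l := hperm.mem_iff.mp (List.getElem_mem _)
      rw [hl, List.mem_ofFn] at hmem
      obtain ⟨i, hi⟩ := hmem
      exact ⟨i, hi⟩
    · rintro ⟨j, rfl⟩
      have hmem : x j.castSucc ∈ l' := by
        rw [hperm.mem_iff, hl, List.mem_ofFn]
        exact ⟨j, rfl⟩
      obtain ⟨m, hm, hme⟩ := List.mem_iff_getElem.mp hmem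
      exact ⟨⟨m, by omega⟩, hme⟩
  have hcount : ∀ (p : ℝ → Prop) [DecidablePred p],
      (univ.filter fun j : Fin n => p (x j.castSucc)).card
        = (univ.filter fun j : Fin n => p (y j)).card := by
    intro p _
    rw [card_filter_comp_inj _ hxc, card_filter_comp_inj _ hymono.injective, himg]
  have hkidx : k - 1 < n := by omega
  set kidx : Fin n := ⟨k - 1, hkidx⟩ with hkidxdef
  set q : ℝ := y kidx with hq
  have horder : orderStat l k = q := by
    unfold orderStat
    rw [List.getD_eq_getElem _ _ (by rw [← hl', hlen]; omega)]
  have hcardle : (univ.filter fun j : Fin n => x j.castSucc ≤ q).card = k := by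
    rw [hcount (fun t => t ≤ q)]
    have : (univ.filter fun j : Fin n => y j ≤ q) = Finset.Iic kidx := by
      ext j
      simp only [mem_filter, mem_univ, true_and, Finset.mem_Iic, hq, hymono.le_iff_le]
    rw [this, Fin.card_Iic]
    simp [hkidxdef]; omega
  have hcardlt : (univ.filter fun j : Fin n => x j.castSucc < q).card = k - 1 := by
    rw [hcount (fun t => t < q)]
    have : (univ.filter fun j : Fin n => y j < q) = Finset.Iio kidx := by
      ext j
      simp only [mem_filter, mem_univ, true_and, Finset.mem_Iio, hq, hymono.lt_iff_lt]
    rw [this, Fin.card_Iio]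
  have hsplit : rnk x (Fin.last n)
      = (univ.filter fun j : Fin n => x j.castSucc ≤ x (Fin.last n)).card + 1 := by
    unfold rnk
    rw [Finset.card_filter, Fin.sum_univ_castSucc, ← Finset.card_filter]
    simp
  have hne_last : ∀ j : Fin n, x j.castSucc ≠ x (Fin.last n) := by
    intro j h
    have := hx h
    have : (j : ℕ) = n := by
      have := congrArg Fin.val this
      simpa using this
    omega
  rw [horder]
  constructor
  · intro h
    rw [hsplit]
    have hsub : (univ.filter fun j : Fin n => x j.castSucc ≤ x (Fin.last n))
        ⊆ (univ.filter fun j : Fin n => x j.castSucc < q) := by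
      intro j hj
      simp only [mem_filter, mem_univ, true_and] at *
      exact lt_of_lt_of_le (lt_of_le_of_ne hj (hne_last j)) h
    have := Finset.card_le_card hsub
    rw [hcardlt] at this
    omega
  · intro h
    by_contra hcon
    push_neg at hcon
    have hsub : (univ.filter fun j : Fin n => x j.castSucc ≤ q)
        ⊆ (univ.filter fun j : Fin n => x j.castSucc ≤ x (Fin.last n)) := by
      intro j hj
      simp only [mem_filter, mem_univ, true_and] at *
      exact hj.trans hcon.le
    have := Finset.card_le_card hsub
    rw [hcardle] at this
    rw [hsplit] at h
    omega

section measlemmas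
variable {n : ℕ}


lemma rnk_measurable (i : Fin (n+1)) :
    Measurable (fun x : Fin (n+1) → ℝ => rnk x i) := by
  have : (fun x : Fin (n+1) → ℝ => rnk x i)
      = fun x => ∑ j : Fin (n+1), if x j ≤ x i then 1 else 0 := by
    funext x
    exact Finset.card_filter _ _
  rw [this]
  apply Finset.measurable_sum
  intro j _
  exact Measurable.ite (measurableSet_le (measurable_pi_apply j) (measurable_pi_apply i))
    measurable_const measurable_const

lemma injective_measurableSet :
    MeasurableSet {x : Fin (n+1) → ℝ | Injective x} := by
  have h : {x : Fin (n+1) → ℝ | Injective x}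
      = ⋂ (i) (j), {x : Fin (n+1) → ℝ | i ≠ j → x i ≠ x j} := by
    ext x
    simp only [Set.mem_setOf_eq, Set.mem_iInter, Injective]
    constructor
    · intro h i j hij hxij
      exact hij (h hxij)
    · intro h i j hxij
      by_contra hne
      exact h i j hne hxij
  rw [h]
  refine MeasurableSet.iInter fun i => MeasurableSet.iInter fun j => ?_
  by_cases hij : i = j
  · simp [hij]
  · have : {x : Fin (n+1) → ℝ | i ≠ j → x i ≠ x j} = {x : Fin (n+1) → ℝ | x i = x j}ᶜ := by
      ext x; simp [hij]
    rw [this]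
    exact (measurableSet_eq_fun (measurable_pi_apply i) (measurable_pi_apply j)).compl


end measlemmas

/-- The conformal calibration lemma: coverage upper bound under almost-sure distinctness. -/
theorem conformal_coverage_upper (n : ℕ) {Ω : Type*} [MeasurableSpace Ω]
    (P : Measure Ω) [IsProbabilityMeasure P]
    (s : Fin (n + 1) → Ω → ℝ) (hmeas : ∀ i, Measurable (s i))
    (hexch : ∀ σ : Equiv.Perm (Fin (n + 1)),
      Measure.map (fun ω i => s (σ i) ω) P = Measure.map (fun ω i => s i ω) P)
    (hdist : P {ω | ∃ i j, i ≠ j ∧ s i ω = s j ω} = 0)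
    (α : ℝ) (hα0 : 0 < α) (hα1 : α < 1) :
    P {ω | n < (⌈(1 - α) * ((n : ℝ) + 1)⌉).toNat ∨
           s (Fin.last n) ω ≤
             orderStat (List.ofFn fun i : Fin n => s i.castSucc ω)
               (⌈(1 - α) * ((n : ℝ) + 1)⌉).toNat}
      ≤ ENNReal.ofReal (1 - α + 1 / ((n : ℝ) + 1)) := by
  set z : ℝ := (1 - α) * ((n : ℝ) + 1) with hzdef
  have hzpos : 0 < z := by
    apply mul_pos <;> nlinarith
  set k : ℕ := (⌈z⌉).toNat with hkdef
  have hceil_pos : (0 : ℤ) < ⌈z⌉ := Int.ceil_pos.mpr hzpos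
  have hk1 : 1 ≤ k := by omega
  have hkz : (k : ℝ) = (⌈z⌉ : ℝ) := by
    rw [hkdef]
    exact_mod_cast congrArg (Int.cast : ℤ → ℝ) (Int.toNat_of_nonneg hceil_pos.le)
  have hklt : (k : ℝ) < z + 1 := by
    rw [hkz]; exact Int.ceil_lt_add_one z
  have hnpos : (0 : ℝ) < (n : ℝ) + 1 := by positivity
  by_cases hnk : n < k
  · -- trivial case: RHS ≥ 1
    refine le_trans prob_le_one ?_
    rw [ENNReal.one_le_ofReal]
    have hzgt : (n : ℝ) < z := by
      have h2 : (n : ℤ) < ⌈z⌉ := by omega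
      exact_mod_cast Int.lt_ceil.mp h2
    have h3 : α * ((n : ℝ) + 1) < 1 := by nlinarith
    have h1 : α < 1 / ((n : ℝ) + 1) := by
      rw [lt_div_iff₀ hnpos]; linarith
    linarith
  · push_neg at hnk  -- k ≤ n
    -- joint random vector
    set J : Ω → (Fin (n+1) → ℝ) := fun ω i => s i ω with hJdef
    have hJ : Measurable J := measurable_pi_lambda _ hmeas
    -- events
    set C : Fin (n+1) → Set (Fin (n+1) → ℝ) :=
      fun i => {x | Injective x ∧ rnk x i ≤ k} with hCdef
    have hCm : ∀ i, MeasurableSet (C i) := by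
      intro i
      exact injective_measurableSet.inter ((rnk_measurable i) measurableSet_Iic)
    set B : Fin (n+1) → Set Ω := fun i => J ⁻¹' (C i) with hBdef
    have hBm : ∀ i, MeasurableSet (B i) := fun i => hJ (hCm i)
    -- exchangeability: all B i have equal measure
    have hswap : ∀ i, P (B i) = P (B (Fin.last n)) := by
      intro i
      set σ : Equiv.Perm (Fin (n+1)) := Equiv.swap i (Fin.last n) with hσdef
      set T : (Fin (n+1) → ℝ) → (Fin (n+1) → ℝ) := fun x j => x (σ j) with hTdef
      have hT : Measurable T := measurable_pi_lambda _ fun j => measurable_pi_apply _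
      have hpre : T ⁻¹' (C (Fin.last n)) = C i := by
        ext x
        simp only [hTdef, hCdef, Set.mem_preimage, Set.mem_setOf_eq]
        have h1 : Injective (fun j => x (σ j)) ↔ Injective x :=
          Equiv.injective_comp σ x
        have h2 : rnk (fun j => x (σ j)) (Fin.last n) = rnk x i := by
          show (univ.filter fun j => x (σ j) ≤ x (σ (Fin.last n))).card = _
          rw [card_filter_comp_equiv σ (fun j => x j ≤ x (σ (Fin.last n)))]
          rw [hσdef]
          rw [Equiv.swap_apply_right]
          rfl
        rw [h1, h2]
      have hTJ : T ∘ J = fun ω j => s (σ j) ω := rfl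
      calc P (B i) = P ((T ∘ J) ⁻¹' (C (Fin.last n))) := by
            rw [Set.preimage_comp, hpre]
        _ = (Measure.map (T ∘ J) P) (C (Fin.last n)) :=
            (Measure.map_apply (hT.comp hJ) (hCm _)).symm
        _ = (Measure.map J P) (C (Fin.last n)) := by rw [hTJ, hexch σ]
        _ = P (B (Fin.last n)) := Measure.map_apply hJ (hCm _)
    -- the good event
    set D : Set Ω := {ω | Injective fun i => s i ω} with hDdef
    have hDm : MeasurableSet D := hJ injective_measurableSet
    have hDc : Dᶜ = {ω | ∃ i j, i ≠ j ∧ s i ω = s j ω} := by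
      ext ω
      simp only [hDdef, Set.mem_compl_iff, Set.mem_setOf_eq, Injective, not_forall]
      constructor
      · rintro ⟨i, j, hij, hne⟩
        exact ⟨i, j, hne, hij⟩
      · rintro ⟨i, j, hne, hij⟩
        exact ⟨i, j, hij, hne⟩
    have hD1 : P D = 1 := by
      rw [← prob_compl_eq_zero_iff hDm] at *
      rw [hDc]
      exact hdist
    -- sum of the measures equals k
    have hptwise : ∀ ω, ∑ i : Fin (n+1), (B i).indicator (fun _ => (1 : ℝ≥0∞)) ω
        = D.indicator (fun _ => (k : ℝ≥0∞)) ω := by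
      intro ω
      by_cases hω : ω ∈ D
      · have hinj : Injective (J ω) := hω
        have heach : ∀ i, (B i).indicator (fun _ => (1 : ℝ≥0∞)) ω
            = if rnk (J ω) i ≤ k then 1 else 0 := by
          intro i
          by_cases hr : rnk (J ω) i ≤ k
          · rw [if_pos hr, Set.indicator_of_mem]
            exact ⟨hinj, hr⟩
          · rw [if_neg hr, Set.indicator_of_notMem]
            exact fun hc => hr hc.2
        rw [Set.indicator_of_mem hω]
        simp only [heach]
        have : ∑ i : Fin (n+1), (if rnk (J ω) i ≤ k then (1 : ℝ≥0∞) else 0)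
            = ((univ.filter fun i => rnk (J ω) i ≤ k).card : ℝ≥0∞) := by
          rw [Finset.card_filter]
          push_cast
          simp
        rw [this, card_rnk_le (J ω) hinj k (by omega)]
      · rw [Set.indicator_of_notMem hω]
        have : ∀ i, (B i).indicator (fun _ => (1 : ℝ≥0∞)) ω = 0 := by
          intro i
          apply Set.indicator_of_notMem
          exact fun hc => hω hc.1
        simp [this]
    have hsum : ∑ i : Fin (n+1), P (B i) = (k : ℝ≥0∞) := by
      have h1 : ∀ i : Fin (n+1), P (B i) = ∫⁻ ω, (B i).indicator (fun _ => (1 : ℝ≥0∞)) ω ∂P := by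
        intro i
        rw [lintegral_indicator (hBm i)]
        simp
      calc ∑ i : Fin (n+1), P (B i)
          = ∑ i : Fin (n+1), ∫⁻ ω, (B i).indicator (fun _ => (1 : ℝ≥0∞)) ω ∂P := by
            exact Finset.sum_congr rfl fun i _ => h1 i
        _ = ∫⁻ ω, ∑ i : Fin (n+1), (B i).indicator (fun _ => (1 : ℝ≥0∞)) ω ∂P := by
            rw [lintegral_finset_sum]
            intro i _
            exact (measurable_const.indicator (hBm i))
        _ = ∫⁻ ω, D.indicator (fun _ => (k : ℝ≥0∞)) ω ∂P := by
            congr 1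
            funext ω
            exact hptwise ω
        _ = (k : ℝ≥0∞) * P D := by
            rw [lintegral_indicator hDm]
            simp [mul_comm]
        _ = (k : ℝ≥0∞) := by rw [hD1, mul_one]
    have hconst : ∑ i : Fin (n+1), P (B i) = ((n : ℝ≥0∞) + 1) * P (B (Fin.last n)) := by
      rw [Finset.sum_congr rfl fun i _ => hswap i, Finset.sum_const, card_univ, Fintype.card_fin,
        nsmul_eq_mul]
      push_cast
      ring
    have hBlast : ((n : ℝ≥0∞) + 1) * P (B (Fin.last n)) = (k : ℝ≥0∞) := by
      rw [← hconst, hsum]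
    -- identify the target set with B last, up to null sets
    have hDae : ∀ᵐ ω ∂P, Injective (fun i => s i ω) := by
      rw [ae_iff]
      have : {ω | ¬ Injective (fun i => s i ω)} = Dᶜ := rfl
      rw [this, hDc]
      exact hdist
    have hae : {ω | n < k ∨ s (Fin.last n) ω ≤
          orderStat (List.ofFn fun i : Fin n => s i.castSucc ω) k} =ᵐ[P] B (Fin.last n) := by
      rw [Filter.eventuallyEq_set]
      filter_upwards [hDae] with ω hω
      simp only [Set.mem_setOf_eq, hBdef, Set.mem_preimage, hCdef]
      constructor
      · rintro (h | h)
        · omega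
        · exact ⟨hω, (rank_iff k hk1 hnk (J ω) hω).mp h⟩
      · rintro ⟨-, h⟩
        exact Or.inr ((rank_iff k hk1 hnk (J ω) hω).mpr h)
    rw [measure_congr hae]
    -- conclude
    have hPB : P (B (Fin.last n)) = (k : ℝ≥0∞) / ((n : ℝ≥0∞) + 1) := by
      rw [ENNReal.eq_div_iff (by simp) (by simp)]
      exact hBlast
    rw [hPB]
    have hden : ((n : ℝ≥0∞) + 1) = ENNReal.ofReal ((n : ℝ) + 1) := by
      rw [ENNReal.ofReal_add (by positivity) (by norm_num), ENNReal.ofReal_natCast,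
        ENNReal.ofReal_one]
    rw [hden, ← ENNReal.ofReal_natCast k, ← ENNReal.ofReal_div_of_pos hnpos]
    apply ENNReal.ofReal_le_ofReal
    rw [div_le_iff₀ hnpos]
    have hexp : (1 - α + 1 / ((n : ℝ) + 1)) * ((n : ℝ) + 1) = z + 1 := by
      rw [hzdef]; field_simp
    rw [hexp]
    exact hklt.le
end
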